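/- Let d ≥ 2, let |φ_d⟩ = (1/√d) Σ_{i=0}^{d−1} |i⟩ be the maximally coherent state, and for 0 < p ≤ 1 let ρ_m = p|φ_d⟩⟨φ_d| + ((1−p)/d) I_d be the maximally coherent mixed state. Then the modified trace distance measure of coherence of ρ_m equals p: inf_{λ ≥ 0, δ diagonal density matrix} ‖ρ_m − λδ‖_tr = p. -/

import Mathlib

open Matrix
open scoped ComplexOrder

/-- The trace norm of a matrix `A`: `‖A‖_tr = Tr √(AᴴA)`. -/
noncomputable def traceNorm {d : ℕ} (A : Matrix (Fin d) (Fin d) ℂ) : ℝ :=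
  (((Matrix.posSemidef_conjTranspose_mul_self A).1.eigenvectorUnitary.1 *
    diagonal (((↑) : ℝ → ℂ) ∘ (√·) ∘ (Matrix.posSemidef_conjTranspose_mul_self A).1.eigenvalues) *
    (star (Matrix.posSemidef_conjTranspose_mul_self A).1.eigenvectorUnitary :
      Matrix (Fin d) (Fin d) ℂ)).trace).re

/-- The maximally coherent state `|φ_d⟩ = (1/√d) Σ_i |i⟩`. -/
noncomputable def phi (d : ℕ) : Fin d → ℂ :=
  fun _ => ((Real.sqrt d : ℂ))⁻¹

/-- The maximally coherent mixed state `ρ_m = p|φ_d⟩⟨φ_d| + ((1−p)/d) I_d`. -/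
noncomputable def mcms (d : ℕ) (p : ℝ) : Matrix (Fin d) (Fin d) ℂ :=
  p • Matrix.vecMulVec (phi d) (star (phi d)) + ((1 - p) / d : ℝ) • 1

/-!
The trace norm is dual to the operator norm: with `M = M⁺ - M⁻` and `|M| = M⁺ + M⁻`, for
Hermitian `M` and `-1 ≤ B ≤ 1` one has `Tr |M| - Tr (M B) = Tr (M⁺ (1 - B)) + Tr (M⁻ (1 + B)) ≥ 0`.
Let `P = |φ_d⟩⟨φ_d|`. Every entry of `P` is `1/d`, so `Tr (δ P) = 1/d` for every diagonal `δ`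
of trace one. Testing `M = ρ_m - λδ` against `B = P` when `λ ≤ 1 - p`, and against the
reflection `B = P - (1 - P)` when `λ > 1 - p` (this is where `d ≥ 2` enters), bounds `‖M‖_tr`
below by `p`. The value `p` is attained at `λ = 1 - p`, `δ = I/d`, where `ρ_m - λδ = pP`.
-/

open scoped MatrixOrder

theorem IsStarProjection.sub_one_sub_mem_Icc {R : Type*} [Ring R] [PartialOrder R] [StarRing R]
    [StarOrderedRing R] {q : R} (hq : IsStarProjection q) : q - (1 - q) ∈ Set.Icc (-1) 1 := by
  constructor
  · rw [show q - (1 - q) = -1 + (q + q) by abel]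
    exact le_add_of_nonneg_right (add_nonneg hq.nonneg hq.nonneg)
  · rw [show q - (1 - q) = 1 - ((1 - q) + (1 - q)) by abel]
    exact sub_le_self _ (add_nonneg hq.one_sub_nonneg hq.one_sub_nonneg)

namespace Matrix

variable {n 𝕜 : Type*} [Fintype n] [RCLike 𝕜]

theorem trace_mul_nonneg [DecidableEq n] {A C : Matrix n n 𝕜} (hA : 0 ≤ A) (hC : 0 ≤ C) :
    0 ≤ (A * C).trace := by
  set s := CFC.sqrt A
  have hs : IsSelfAdjoint s := (CFC.sqrt_nonneg A).isSelfAdjoint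
  have hss : s * s = A := CFC.sqrt_mul_sqrt_self A hA
  calc (0 : 𝕜) ≤ (star s * C * s).trace :=
        ((nonneg_iff_posSemidef.mp hC).conjTranspose_mul_mul_same s).trace_nonneg
    _ = (A * C).trace := by rw [hs.star_eq, ← hss, trace_mul_comm, ← Matrix.mul_assoc]

theorem re_trace_mul_le_re_trace_abs [DecidableEq n] {M B : Matrix n n 𝕜} (hM : M.IsHermitian)
    (hB : B ∈ Set.Icc (-1) 1) : RCLike.re (M * B).trace ≤ RCLike.re (CFC.abs M).trace := by
  have hsplit : CFC.abs M - M * B = M⁺ * (1 - B) + M⁻ * (1 + B) := by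
    rw [← CFC.posPart_add_negPart M hM.isSelfAdjoint]
    nth_rw 3 [← CFC.posPart_sub_negPart M hM.isSelfAdjoint]
    noncomm_ring
  have hnonneg : 0 ≤ (CFC.abs M - M * B).trace := by
    rw [hsplit, trace_add]
    exact add_nonneg (trace_mul_nonneg (CFC.posPart_nonneg M) (sub_nonneg.mpr hB.2))
      (trace_mul_nonneg (CFC.negPart_nonneg M) (neg_le_iff_add_nonneg'.mp hB.1))
  rw [trace_sub] at hnonneg
  exact RCLike.re_le_re (sub_nonneg.mp hnonneg)

theorem isStarProjection_vecMulVec_self_star {v : n → 𝕜} (hv : star v ⬝ᵥ v = 1) :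
    IsStarProjection (vecMulVec v (star v)) where
  isIdempotentElem := by rw [IsIdempotentElem, vecMulVec_mul_vecMulVec, hv, one_smul]
  isSelfAdjoint := by
    rw [IsSelfAdjoint, star_eq_conjTranspose, conjTranspose_vecMulVec, star_star]

end Matrix

section TraceNorm

variable {d : ℕ}

theorem traceNorm_eq_re_trace_abs (A : Matrix (Fin d) (Fin d) ℂ) :
    traceNorm A = (CFC.abs A).trace.re := by
  have hA := posSemidef_conjTranspose_mul_self A
  rw [CFC.abs, star_eq_conjTranspose, CFC.sqrt_eq_real_sqrt _ (nonneg_iff_posSemidef.mpr hA),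
    cfcₙ_eq_cfc, hA.1.cfc_eq, IsHermitian.cfc, Unitary.conjStarAlgAut_apply]
  rfl

theorem re_trace_mul_le_traceNorm {M B : Matrix (Fin d) (Fin d) ℂ} (hM : M.IsHermitian)
    (hB : B ∈ Set.Icc (-1) 1) : (M * B).trace.re ≤ traceNorm M :=
  traceNorm_eq_re_trace_abs M ▸ re_trace_mul_le_re_trace_abs hM hB

theorem traceNorm_of_nonneg {A : Matrix (Fin d) (Fin d) ℂ} (hA : 0 ≤ A) :
    traceNorm A = A.trace.re := by
  rw [traceNorm_eq_re_trace_abs, CFC.abs_of_nonneg A hA]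

end TraceNorm

section MaximallyCoherent

variable {d : ℕ}

local notation:max "Φ" d:max => vecMulVec (phi d) (star (phi d))

theorem star_phi : star (phi d) = phi d := by
  ext i
  simp [phi, Complex.conj_ofReal]

theorem phi_mul_phi (i j : Fin d) : phi d i * phi d j = (d : ℂ)⁻¹ := by
  simp only [phi]
  rw [← mul_inv, ← Complex.ofReal_mul, Real.mul_self_sqrt d.cast_nonneg, Complex.ofReal_natCast]

theorem vecMulVec_phi_apply (i j : Fin d) : (Φ d) i j = (d : ℂ)⁻¹ := by
  rw [star_phi, vecMulVec_apply, phi_mul_phi]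

theorem star_phi_dotProduct_phi (hd : d ≠ 0) : star (phi d) ⬝ᵥ phi d = 1 := by
  simp only [star_phi, dotProduct, phi_mul_phi, Finset.sum_const, Finset.card_univ,
    Fintype.card_fin, nsmul_eq_mul]
  exact mul_inv_cancel₀ (Nat.cast_ne_zero.mpr hd)

theorem isStarProjection_phi (hd : d ≠ 0) : IsStarProjection (Φ d) :=
  isStarProjection_vecMulVec_self_star (star_phi_dotProduct_phi hd)

theorem trace_vecMulVec_phi (hd : d ≠ 0) : (Φ d).trace = 1 := by
  rw [trace_vecMulVec, dotProduct_comm, star_phi_dotProduct_phi hd]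

theorem trace_mul_phi_of_isDiag {δ : Matrix (Fin d) (Fin d) ℂ} (hδ : δ.IsDiag) :
    (δ * Φ d).trace = δ.trace / d := by
  simp only [trace, diag_apply, mul_apply, vecMulVec_phi_apply, ← Finset.sum_mul, div_eq_mul_inv]
  congr 1
  exact Finset.sum_congr rfl fun i _ =>
    Finset.sum_eq_single i (fun j _ hji => hδ hji.symm) (by simp)

theorem mcms_mul_phi (hd : d ≠ 0) (p : ℝ) :
    mcms d p * Φ d = (p + (1 - p) / d : ℝ) • Φ d := by
  rw [mcms, add_mul, smul_mul, smul_mul, (isStarProjection_phi hd).isIdempotentElem.eq, one_mul,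
    add_smul]

theorem trace_mcms (hd : d ≠ 0) (p : ℝ) : (mcms d p).trace = 1 := by
  have hd' : (d : ℂ) ≠ 0 := Nat.cast_ne_zero.mpr hd
  rw [mcms, trace_add, trace_smul, trace_smul, trace_vecMulVec_phi hd, trace_one,
    Fintype.card_fin, Complex.real_smul, Complex.real_smul]
  push_cast
  field_simp
  ring

theorem isHermitian_mcms (p : ℝ) : (mcms d p).IsHermitian :=
  ((IsSelfAdjoint.all p).smul (posSemidef_vecMulVec_self_star (phi d)).1).add
    ((IsSelfAdjoint.all _).smul (IsSelfAdjoint.one _))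

theorem mcms_sub_smul_one (p : ℝ) :
    mcms d p - (1 - p) • ((d : ℝ)⁻¹ • 1 : Matrix (Fin d) (Fin d) ℂ) = p • Φ d := by
  rw [mcms, smul_smul, div_eq_mul_inv, add_sub_cancel_right]

theorem trace_mcms_sub_smul_mul_phi (hd : d ≠ 0) (p l : ℝ) {δ : Matrix (Fin d) (Fin d) ℂ}
    (hδd : δ.IsDiag) (hδt : δ.trace = 1) :
    ((mcms d p - l • δ) * Φ d).trace = (p + (1 - p) / d - l / d : ℝ) := by
  rw [sub_mul, smul_mul, mcms_mul_phi hd, trace_sub, trace_smul, trace_smul,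
    trace_vecMulVec_phi hd, trace_mul_phi_of_isDiag hδd, hδt, Complex.real_smul,
    Complex.real_smul]
  push_cast
  ring

theorem trace_mcms_sub_smul (hd : d ≠ 0) (p l : ℝ) {δ : Matrix (Fin d) (Fin d) ℂ}
    (hδt : δ.trace = 1) : (mcms d p - l • δ).trace = (1 - l : ℝ) := by
  rw [trace_sub, trace_smul, trace_mcms hd, hδt, Complex.real_smul]
  push_cast
  ring

theorem le_traceNorm_mcms_sub_smul (hd : 2 ≤ d) (p l : ℝ) {δ : Matrix (Fin d) (Fin d) ℂ}
    (hδ : δ.IsHermitian) (hδd : δ.IsDiag) (hδt : δ.trace = 1) :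
    p ≤ traceNorm (mcms d p - l • δ) := by
  have hd0 : d ≠ 0 := by omega
  have hdR : (2 : ℝ) ≤ d := by exact_mod_cast hd
  have hP := isStarProjection_phi hd0
  have hM : (mcms d p - l • δ).IsHermitian :=
    (isHermitian_mcms p).sub ((IsSelfAdjoint.all l).smul hδ)
  rcases le_or_gt l (1 - p) with hl | hl
  · have hdual := re_trace_mul_le_traceNorm hM
      (Set.Icc_subset_Icc_left (neg_nonpos.mpr zero_le_one) hP.mem_Icc)
    rw [trace_mcms_sub_smul_mul_phi hd0 p l hδd hδt, Complex.ofReal_re] at hdual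
    have : 0 ≤ (1 - p - l) / d := div_nonneg (by linarith) (by linarith)
    linarith [show (1 - p) / d - l / d = (1 - p - l) / d by ring]
  · have hdual := re_trace_mul_le_traceNorm hM hP.sub_one_sub_mem_Icc
    rw [mul_sub, mul_sub, mul_one, trace_sub, trace_sub,
      trace_mcms_sub_smul_mul_phi hd0 p l hδd hδt, trace_mcms_sub_smul hd0 p l hδt] at hdual
    simp only [Complex.sub_re, Complex.ofReal_re] at hdual
    have : 2 * (l - (1 - p)) / d ≤ l - (1 - p) := by
      rw [div_le_iff₀ (by linarith)]
      nlinarith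
    linarith [show 2 * (l - (1 - p)) / d = -2 * ((1 - p) / d - l / d) by ring]

end MaximallyCoherent

/-- The modified trace distance measure of coherence of the maximally coherent
mixed state `ρ_m = p|φ_d⟩⟨φ_d| + ((1−p)/d) I_d` equals `p`. -/
theorem modified_trace_coherence_mcms {d : ℕ} (hd : 2 ≤ d) (p : ℝ)
    (hp0 : 0 < p) (hp1 : p ≤ 1) :
    sInf {x : ℝ | ∃ (l : ℝ) (δ : Matrix (Fin d) (Fin d) ℂ),
        0 ≤ l ∧ δ.PosSemidef ∧ δ.trace = 1 ∧ δ.IsDiag ∧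
        x = traceNorm (mcms d p - l • δ)} = p := by
  have hd0 : d ≠ 0 := by omega
  refine IsLeast.csInf_eq
    ⟨⟨1 - p, (d : ℝ)⁻¹ • 1, by linarith, ?_, ?_, isDiag_one.smul _, ?_⟩, ?_⟩
  · exact PosSemidef.one.smul (by positivity)
  · rw [trace_smul, trace_one, Fintype.card_fin, Complex.real_smul, Complex.ofReal_inv,
      Complex.ofReal_natCast, inv_mul_cancel₀ (Nat.cast_ne_zero.mpr hd0)]
  · have hP := isStarProjection_phi hd0
    rw [mcms_sub_smul_one, traceNorm_of_nonneg (smul_nonneg hp0.le hP.nonneg), trace_smul,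
      trace_vecMulVec_phi hd0]
    simp
  · rintro x ⟨l, δ, -, hδ, hδt, hδd, rfl⟩
    exact le_traceNorm_mcms_sub_smul hd p l hδ.1 hδd hδt
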